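/- arXiv:2509.12360 — 2 statements merged into one kernel-verified Lean document; each statement's English description precedes it below -/
import Mathlib

section
/- Let f : S → T be a minor embedding of rooted trees, and let c be a common ancestor of a and b in S with a directed path a ⇝ b in S being absent and b ⇝ a absent. If c is the lowest common ancestor of a and b, then f(a) and f(b) are incomparable in T, i.e., there is no directed path between f(a) and f(b). -/
/-- A directed path in a graph `E`, given as a nonempty list of visited nodes
from `a` to `b` (endpoints included). A trivial path is `[a]` with `a = b`. -/
def IsPath {V : Type*} (E : V → V → Prop) (p : List V) (a b : V) : Prop :=
  p.Chain' E ∧ p.head? = some a ∧ p.getLast? = some b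

/-- There is a (possibly trivial) directed path from `a` to `b`. -/
def Reach {V : Type*} (E : V → V → Prop) (a b : V) : Prop :=
  ∃ p : List V, IsPath E p a b

/-- A rooted tree: a finite directed graph with root `r` such that every node is
reachable from `r` by a unique directed path (and there are no self-loops). -/
structure IsRootedTree {V : Type*} [Fintype V] (E : V → V → Prop) (r : V) : Prop where
  no_self : ∀ v, ¬ E v v
  reach : ∀ v, ∃ p : List V, IsPath E p r v
  path_unique : ∀ v (p q : List V), IsPath E p r v → IsPath E q r v → p = q

/-- A minor embedding `f : S → T`: an injective node map such that every arc `(a,b)`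
of `S` maps to a directed path from `f a` to `f b` in `T` with no intermediate node
in the image of `f`. -/
def IsMinorEmb {V W : Type*} (ES : V → V → Prop) (ET : W → W → Prop) (f : V → W) : Prop :=
  Function.Injective f ∧
    ∀ a b, ES a b → ∃ p : List W, IsPath ET p (f a) (f b) ∧
      ∀ x ∈ p.tail.dropLast, x ∉ Set.range f

/-!
Suppose `f a ⇝ f b` in `T`, and let `c` be a common ancestor of `a` and `b`. The image of the
path `c ⇝ b` is a path `P : f c ⇝ f b` whose only image nodes are images of nodes of `c ⇝ b`,
and the root path of `f b` is the root path of `f c` followed by `P`. Since `f a` is an ancestor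
of `f b`, it lies on that root path. If it lies on the root path of `f c`, then `f a ⇝ f c ⇝ f a`,
so `a = c ⇝ b`; otherwise `f a ∈ P`, so `a` lies on the path `c ⇝ b`. Either way `a ⇝ b`.
-/

namespace IsPath

variable {V : Type*} {E : V → V → Prop} {p q : List V} {a b c x : V}

lemma ne_nil (h : IsPath E p a b) : p ≠ [] := by
  rintro rfl; simp [IsPath] at h

lemma singleton (a : V) : IsPath E [a] a a :=
  ⟨List.isChain_singleton a, rfl, rfl⟩

lemma reach (hp : IsPath E p a b) : Reach E a b := ⟨p, hp⟩

lemma of_cons_cons {z w : V} {t : List V} (hp : IsPath E (z :: w :: t) a b) :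
    z = a ∧ E z w ∧ IsPath E (w :: t) w b := by
  obtain ⟨hc, ha, hb⟩ := hp
  obtain ⟨hzw, hc⟩ := List.isChain_cons_cons.mp hc
  exact ⟨by simpa using ha, hzw, hc, rfl, by simpa using hb⟩

lemma append (hp : IsPath E p a b) (hq : IsPath E q b c) : IsPath E (p ++ q.tail) a c := by
  obtain ⟨cp, hph, hpl⟩ := hp
  obtain ⟨cq, hqh, hql⟩ := hq
  cases q with
  | nil => simp at hqh
  | cons z t =>
    obtain rfl : z = b := by simpa using hqh
    cases t with
    | nil =>
      obtain rfl : z = c := by simpa using hql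
      simpa using ⟨cp, hph, hpl⟩
    | cons w t =>
      refine ⟨?_, ?_, ?_⟩
      · refine List.isChain_append.mpr ⟨cp, (List.isChain_cons_cons.mp cq).2, ?_⟩
        intro u hu v hv
        obtain rfl : z = u := by simpa [hpl] using hu
        obtain rfl : w = v := by simpa using hv
        exact (List.isChain_cons_cons.mp cq).1
      · cases p with
        | nil => simp at hph
        | cons => simpa using hph
      · rw [List.getLast?_append_of_ne_nil _ (by simp)]
        simpa using hql

lemma reach_of_mem (hp : IsPath E p a b) (hx : x ∈ p) : Reach E x b := by
  obtain ⟨cp, -, hpl⟩ := hp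
  obtain ⟨l₁, l₂, rfl⟩ := List.append_of_mem hx
  exact ⟨x :: l₂, cp.suffix ⟨l₁, rfl⟩, rfl, by rwa [List.getLast?_append_cons] at hpl⟩

lemma eq_or_eq_or_mem_tail_dropLast (hp : IsPath E p a b) (hx : x ∈ p) :
    x = a ∨ x = b ∨ x ∈ p.tail.dropLast := by
  obtain ⟨-, hph, hpl⟩ := hp
  match p, hx with
  | z :: t, hx =>
    obtain rfl : z = a := by simpa using hph
    rcases List.mem_cons.mp hx with rfl | hxt
    · exact Or.inl rfl
    · have ht : t ≠ [] := List.ne_nil_of_mem hxt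
      have hlast : t.getLast ht = b := by
        simpa [List.getLast?_cons, List.getLast?_eq_some_getLast ht] using hpl
      rw [← List.dropLast_append_getLast ht, hlast] at hxt
      rcases List.mem_append.mp hxt with h | h
      · exact Or.inr (Or.inr h)
      · exact Or.inr (Or.inl (List.mem_singleton.mp h))

end IsPath

namespace IsRootedTree

variable {V : Type*} [Fintype V] {E : V → V → Prop} {r a b x : V} {p : List V}

lemma reach_antisymm (hT : IsRootedTree E r) (hab : Reach E a b) (hba : Reach E b a) :
    a = b := by
  obtain ⟨p, hp⟩ := hab
  obtain ⟨q, hq⟩ := hba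
  obtain ⟨pr, hpr⟩ := hT.reach a
  -- `pr` followed by the cycle `a ⇝ b ⇝ a` is again a root path to `a`, so the cycle is trivial.
  have hlen := congrArg List.length <|
    hT.path_unique a _ _ ((hpr.append hp).append hq) hpr
  have hp₁ : p.length = 1 := by
    have := List.length_pos_iff.mpr hp.ne_nil
    simp at hlen
    omega
  obtain ⟨z, rfl⟩ := List.length_eq_one_iff.mp hp₁
  obtain ⟨-, ha, hb⟩ := hp
  simp_all

lemma mem_of_reach (hT : IsRootedTree E r) (hxb : Reach E x b) (hp : IsPath E p r b) :
    x ∈ p := by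
  obtain ⟨q, hq⟩ := hxb
  obtain ⟨pr, hpr⟩ := hT.reach x
  rw [hT.path_unique b _ _ hp (hpr.append hq)]
  obtain ⟨hne, hx⟩ := List.mem_getLast?_eq_getLast hpr.2.2
  exact List.mem_append_left _ (hx ▸ List.getLast_mem hne)

end IsRootedTree

namespace IsMinorEmb

variable {VS VT : Type*} {ES : VS → VS → Prop} {ET : VT → VT → Prop} {f : VS → VT}

lemma exists_isPath_map (hf : IsMinorEmb ES ET f) {p : List VS} {a b : VS}
    (hp : IsPath ES p a b) :
    ∃ P, IsPath ET P (f a) (f b) ∧ ∀ v, f v ∈ P → v ∈ p := by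
  induction p generalizing a with
  | nil => exact absurd rfl hp.ne_nil
  | cons z t ih =>
    cases t with
    | nil =>
      obtain ⟨-, ha, hb⟩ := hp
      obtain rfl : z = a := by simpa using ha
      obtain rfl : z = b := by simpa using hb
      exact ⟨[f z], .singleton _, fun v hv => by simp [hf.1 (List.mem_singleton.mp hv)]⟩
    | cons w t =>
      obtain ⟨rfl, hzw, hwb⟩ := hp.of_cons_cons
      obtain ⟨P₂, hP₂, hmem₂⟩ := ih hwb
      obtain ⟨P₁, hP₁, hinner⟩ := hf.2 z w hzw
      refine ⟨P₁ ++ P₂.tail, hP₁.append hP₂, fun v hv => ?_⟩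
      rcases List.mem_append.mp hv with h₁ | h₂
      · rcases hP₁.eq_or_eq_or_mem_tail_dropLast h₁ with h | h | h
        · simp [hf.1 h]
        · simp [hf.1 h]
        · exact absurd ⟨v, rfl⟩ (hinner _ h)
      · exact List.mem_cons_of_mem _ (hmem₂ v (List.mem_of_mem_tail h₂))

lemma reach_map (hf : IsMinorEmb ES ET f) {a b : VS} (hab : Reach ES a b) :
    Reach ET (f a) (f b) :=
  let ⟨_, hp⟩ := hab
  let ⟨_, hP, _⟩ := hf.exists_isPath_map hp
  hP.reach

lemma not_reach_map_of_common_ancestor [Fintype VT] {rT : VT} (hT : IsRootedTree ET rT)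
    (hf : IsMinorEmb ES ET f) {a b c : VS} (hab : ¬ Reach ES a b)
    (hca : Reach ES c a) (hcb : Reach ES c b) :
    ¬ Reach ET (f a) (f b) := by
  intro hfab
  obtain ⟨p, hp⟩ := hcb
  obtain ⟨P, hP, hmem⟩ := hf.exists_isPath_map hp
  obtain ⟨R, hR⟩ := hT.reach (f c)
  rcases List.mem_append.mp (hT.mem_of_reach hfab (hR.append hP)) with hfaR | hfaP
  · have hac : a = c := hf.1 <| hT.reach_antisymm (hR.reach_of_mem hfaR) (hf.reach_map hca)
    exact hab (hac ▸ hp.reach)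
  · exact hab (hp.reach_of_mem (hmem a (List.mem_of_mem_tail hfaP)))

end IsMinorEmb

theorem stmt7_general {VS VT : Type*} [Fintype VT]
    (ES : VS → VS → Prop) (ET : VT → VT → Prop) (rT : VT)
    (hT : IsRootedTree ET rT)
    (f : VS → VT) (hf : IsMinorEmb ES ET f)
    (a b c : VS)
    (hab : ¬ Reach ES a b) (hba : ¬ Reach ES b a)
    (hca : Reach ES c a) (hcb : Reach ES c b) :
    ¬ Reach ET (f a) (f b) ∧ ¬ Reach ET (f b) (f a) :=
  ⟨hf.not_reach_map_of_common_ancestor hT hab hca hcb,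
    hf.not_reach_map_of_common_ancestor hT hba hcb hca⟩

/-- If `c` is the lowest common ancestor of incomparable nodes `a` and `b` in `S`,
then for a minor embedding `f : S → T` the nodes `f a` and `f b` are incomparable
in `T`: there is no directed path between them. -/
theorem stmt7 {VS VT : Type*} [Fintype VS] [Fintype VT]
    (ES : VS → VS → Prop) (rS : VS) (ET : VT → VT → Prop) (rT : VT)
    (hS : IsRootedTree ES rS) (hT : IsRootedTree ET rT)
    (f : VS → VT) (hf : IsMinorEmb ES ET f)
    (a b c : VS)
    (hab : ¬ Reach ES a b) (hba : ¬ Reach ES b a)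
    (hca : Reach ES c a) (hcb : Reach ES c b)
    (hlca : ∀ d : VS, Reach ES d a → Reach ES d b → Reach ES d c) :
    ¬ Reach ET (f a) (f b) ∧ ¬ Reach ET (f b) (f a) :=
  stmt7_general ES ET rT hT f hf a b c hab hba hca hcb
end

section
/- There exist rooted trees T₁ and T₂ with largest common minor T_μ and smallest common supertree T_σ (under minor embeddings) such that |V(T_σ)| ≠ |V(T₁)| + |V(T₂)| − |V(T_μ)|. -/
/-- There is a common minor of `T₁` and `T₂` with `n` nodes. -/
def CommonMinorSize {V1 V2 : Type*} (E1 : V1 → V1 → Prop) (E2 : V2 → V2 → Prop)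
    (n : ℕ) : Prop :=
  ∃ (E : Fin n → Fin n → Prop) (r : Fin n), IsRootedTree E r ∧
    (∃ f : Fin n → V1, IsMinorEmb E E1 f) ∧ (∃ g : Fin n → V2, IsMinorEmb E E2 g)

/-- There is a common supertree of `T₁` and `T₂` with `n` nodes. -/
def CommonSupSize {V1 V2 : Type*} (E1 : V1 → V1 → Prop) (E2 : V2 → V2 → Prop)
    (n : ℕ) : Prop :=
  ∃ (E : Fin n → Fin n → Prop) (r : Fin n), IsRootedTree E r ∧
    (∃ f : V1 → Fin n, IsMinorEmb E1 E f) ∧ (∃ g : V2 → Fin n, IsMinorEmb E2 E g)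

open Relation Function

section Paths

variable {V : Type*} {E : V → V → Prop} {p q : List V} {a b c : V}

instance [DecidableEq V] [DecidableRel E] : Decidable (IsPath E p a b) :=
  inferInstanceAs (Decidable (p.IsChain E ∧ _ ∧ _))

theorem IsPath.ne_nil_s16 (h : IsPath E p a b) : p ≠ [] := by
  rintro rfl
  simp [IsPath] at h

theorem IsPath.eq_cons (h : IsPath E p a b) : p = a :: p.tail := by
  obtain ⟨-, hhead, -⟩ := h
  cases p <;> simp_all

theorem IsPath.eq_dropLast_append (h : IsPath E p a b) : p = p.dropLast ++ [b] :=
  (List.dropLast_append_getLast? _ h.2.2).symm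

theorem isPath_pair (h : E a b) : IsPath E [a, b] a b :=
  ⟨List.isChain_pair.2 h, rfl, rfl⟩

theorem IsPath.append_s16 (h₁ : IsPath E p a b) (h₂ : IsPath E q b c) :
    IsPath E (p ++ q.tail) a c := by
  have hpq : p ++ q.tail = p.dropLast ++ [b] ++ q.tail := by rw [← h₁.eq_dropLast_append]
  refine ⟨?_, by rw [List.head?_append_of_ne_nil _ h₁.ne_nil_s16]; exact h₁.2.1, ?_⟩
  · rw [hpq]
    refine List.IsChain.append_overlap ?_ ?_ (List.cons_ne_nil b [])
    · rw [← h₁.eq_dropLast_append]; exact h₁.1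
    · rw [List.singleton_append, ← h₂.eq_cons]; exact h₂.1
  · rw [hpq, List.append_assoc, List.singleton_append, ← h₂.eq_cons,
      List.getLast?_append_of_ne_nil _ h₂.ne_nil_s16]
    exact h₂.2.2

theorem IsPath.concat (h : IsPath E p a b) (hbc : E b c) : IsPath E (p ++ [c]) a c :=
  h.append_s16 (isPath_pair hbc)

theorem IsPath.eq_singleton_or_append (h : IsPath E p a b) :
    (p = [a] ∧ a = b) ∨ ∃ u p', E u b ∧ IsPath E p' a u ∧ p = p' ++ [b] := by
  have hp := h.eq_dropLast_append
  rcases hnil : p.dropLast.getLast? with _ | u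
  · rw [List.getLast?_eq_none_iff.1 hnil, List.nil_append] at hp
    subst hp
    have hab : a = b := by simpa using h.2.1.symm
    exact Or.inl ⟨hab ▸ rfl, hab⟩
  · have hne : p.dropLast ≠ [] := by rintro h'; simp [h'] at hnil
    have hchain : (p.dropLast ++ [b]).IsChain E := hp ▸ h.1
    refine Or.inr ⟨u, p.dropLast, ?_, ⟨hchain.left_of_append, ?_, hnil⟩, hp⟩
    · exact (List.isChain_append.1 hchain).2.2 u hnil b rfl
    · have hhead := h.2.1
      rwa [hp, List.head?_append_of_ne_nil _ hne] at hhead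

theorem IsPath.mem_tail_dropLast (h : IsPath E p a b) (hc : c ∈ p) (hca : c ≠ a)
    (hcb : c ≠ b) : c ∈ p.tail.dropLast := by
  have hc' : c ∈ p.dropLast := by
    rw [h.eq_dropLast_append, List.mem_append, List.mem_singleton] at hc
    exact hc.resolve_right hcb
  obtain ⟨t, rfl⟩ : ∃ t, p = a :: t := ⟨_, h.eq_cons⟩
  have ht : t ≠ [] := by rintro rfl; simp at hc'
  rw [List.dropLast_cons_of_ne_nil ht, List.mem_cons] at hc'
  simpa using hc'.resolve_left hca

theorem IsPath.reflTransGen (h : IsPath E p a b) : ReflTransGen E a b := by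
  rw [h.eq_cons] at h
  exact List.relationReflTransGen_of_exists_isChain_cons _ h.1
    (Option.some_injective _ (by rw [← List.getLast?_eq_some_getLast]; exact h.2.2))

theorem exists_isPath_of_reflTransGen (h : ReflTransGen E a b) : ∃ p, IsPath E p a b := by
  obtain ⟨l, hl, hlast⟩ := List.exists_isChain_cons_of_relationReflTransGen h
  exact ⟨a :: l, hl, rfl, by rw [List.getLast?_eq_some_getLast (List.cons_ne_nil a l), hlast]⟩

end Paths

namespace IsRootedTree

variable {V : Type*} [Fintype V] {E : V → V → Prop} {r : V} {p q : List V} {a b c v : V}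

theorem not_rel_root (hT : IsRootedTree E r) : ¬ E a r := by
  intro har
  obtain ⟨p, hp⟩ := hT.reach a
  have h := congrArg List.length (hT.path_unique r _ [r] (hp.concat har) ⟨List.isChain_singleton r, rfl, rfl⟩)
  simp [hp.ne_nil_s16] at h

theorem parent_unique (hT : IsRootedTree E r) (ha : E a v) (hb : E b v) : a = b := by
  obtain ⟨p, hp⟩ := hT.reach a
  obtain ⟨q, hq⟩ := hT.reach b
  have hpq : p = q := List.append_cancel_right (hT.path_unique v _ _ (hp.concat ha) (hq.concat hb))
  subst hpq
  exact Option.some_injective _ (hp.2.2.symm.trans hq.2.2)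

theorem reflTransGen_root (hT : IsRootedTree E r) (v : V) : ReflTransGen E r v :=
  (hT.reach v).choose_spec.reflTransGen

theorem exists_parent (hT : IsRootedTree E r) (hv : v ≠ r) : ∃ u, E u v := by
  rcases (hT.reflTransGen_root v).cases_tail with rfl | ⟨u, -, hu⟩
  · exact absurd rfl hv
  · exact ⟨u, hu⟩

theorem not_transGen_self (hT : IsRootedTree E r) : ¬ TransGen E a a := by
  induction hT.reflTransGen_root a with
  | refl =>
    intro h
    obtain ⟨u, -, hu⟩ := TransGen.tail'_iff.1 h
    exact hT.not_rel_root hu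
  | tail _ hua ih =>
    intro h
    obtain ⟨u', hau', hu'⟩ := TransGen.tail'_iff.1 h
    obtain rfl := hT.parent_unique hu' hua
    exact ih (TransGen.head' hua hau')

theorem reflTransGen_antisymm (hT : IsRootedTree E r) (hab : ReflTransGen E a b)
    (hba : ReflTransGen E b a) : a = b := by
  rcases reflTransGen_iff_eq_or_transGen.1 hab with rfl | hab'
  · rfl
  · exact absurd (hab'.trans_left hba) hT.not_transGen_self

theorem ne_of_reflTransGen_of_ne (hT : IsRootedTree E r) (hab : ReflTransGen E a b)
    (hbc : ReflTransGen E b c) (hne : a ≠ b) : a ≠ c := by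
  rintro rfl
  exact hne (hT.reflTransGen_antisymm hab hbc)

theorem reflTransGen_total_of_common (hT : IsRootedTree E r) (hac : ReflTransGen E a c)
    (hbc : ReflTransGen E b c) : ReflTransGen E a b ∨ ReflTransGen E b a := by
  have huniq : Relator.RightUnique (swap E) := fun _ _ _ h₁ h₂ => hT.parent_unique h₁ h₂
  simpa only [reflTransGen_swap, or_comm] using
    (reflTransGen_swap.2 hac).total_of_right_unique huniq (reflTransGen_swap.2 hbc)

theorem isPath_unique (hT : IsRootedTree E r) (hp : IsPath E p a b) (hq : IsPath E q a b) :
    p = q := by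
  obtain ⟨s, hs⟩ := hT.reach a
  have h := List.append_cancel_left (hT.path_unique b _ _ (hs.append_s16 hp) (hs.append_s16 hq))
  rw [hp.eq_cons, hq.eq_cons, h]

end IsRootedTree

section UniqueParent

variable {V : Type*} {E : V → V → Prop} {r : V}

theorem isPath_eq_of_unique_parent (hroot : ∀ u, ¬ E u r)
    (hpar : ∀ {a b v}, E a v → E b v → a = b) {p q : List V} {v : V}
    (hp : IsPath E p r v) (hq : IsPath E q r v) : p = q := by
  induction hn : p.length generalizing p q v with
  | zero => exact absurd (List.length_eq_zero_iff.1 hn) hp.ne_nil_s16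
  | succ n ih =>
    rcases hp.eq_singleton_or_append with ⟨rfl, rfl⟩ | ⟨u, p', hu, hp', rfl⟩ <;>
      rcases hq.eq_singleton_or_append with ⟨rfl, hrv⟩ | ⟨u', q', hu', hq', rfl⟩
    · rfl
    · exact absurd hu' (hroot u')
    · exact absurd (hrv ▸ hu) (hroot u)
    · obtain rfl := hpar hu hu'
      rw [ih hp' hq' (by simpa using hn)]

theorem IsRootedTree.of_unique_parent [Fintype V] (hirr : ∀ v, ¬ E v v) (hroot : ∀ u, ¬ E u r)
    (hpar : ∀ {a b v}, E a v → E b v → a = b) (hreach : ∀ v, ReflTransGen E r v) :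
    IsRootedTree E r where
  no_self := hirr
  reach v := exists_isPath_of_reflTransGen (hreach v)
  path_unique _ _ _ := isPath_eq_of_unique_parent hroot hpar

end UniqueParent

section Forks

variable {V : Type*} {E : V → V → Prop} {v w d₁ d₂ : V}

def IsFork (E : V → V → Prop) (w : V) : Prop :=
  ∃ c₁ c₂, c₁ ≠ c₂ ∧ E w c₁ ∧ E w c₂

theorem IsFork.map {W : Type*} {E' : W → W → Prop} {f : V → W} (hf : Injective f)
    (hE : ∀ a b, E a b → E' (f a) (f b)) (h : IsFork E w) : IsFork E' (f w) :=
  let ⟨c₁, c₂, hc, h₁, h₂⟩ := h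
  ⟨f c₁, f c₂, hf.ne hc, hE _ _ h₁, hE _ _ h₂⟩

theorem exists_fork_of_not_reflTransGen (h₁ : ReflTransGen E v d₁) (h₂ : ReflTransGen E v d₂)
    (h₁₂ : ¬ ReflTransGen E d₁ d₂) (h₂₁ : ¬ ReflTransGen E d₂ d₁) :
    ∃ w, IsFork E w ∧ ReflTransGen E v w ∧ ReflTransGen E w d₁ ∧ ReflTransGen E w d₂ := by
  induction h₁ using ReflTransGen.head_induction_on with
  | refl => exact absurd h₂ h₁₂
  | @head v x hvx hxd ih =>
    rcases h₂.cases_head with rfl | ⟨y, hvy, hyd⟩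
    · exact absurd (ReflTransGen.head hvx hxd) h₂₁
    by_cases hxy : x = y
    · subst hxy
      obtain ⟨w, hw, hxw, hw₁, hw₂⟩ := ih hyd
      exact ⟨w, hw, .head hvx hxw, hw₁, hw₂⟩
    · exact ⟨v, ⟨x, y, hxy, hvx, hvy⟩, .refl, .head hvx hxd, .head hvy hyd⟩

open Finset in
theorem IsRootedTree.two_mul_card_lt [Fintype V] {r : V} (hT : IsRootedTree E r) (s : Finset V)
    (hs : ∀ w ∈ s, IsFork E w) : 2 * #s < Fintype.card V := by
  classical
  let children (w : V) : Finset V := univ.filter (E w)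
  have hdisj : (s : Set V).PairwiseDisjoint children := fun a _ b _ hab =>
    disjoint_left.2 fun c hac hbc => hab (hT.parent_unique (by simpa [children] using hac)
      (by simpa [children] using hbc))
  have hsub : s.biUnion children ⊆ univ.erase r := by
    intro c hc
    obtain ⟨a, -, hac⟩ := by simpa [children] using hc
    exact mem_erase.2 ⟨fun hcr => hT.not_rel_root (hcr ▸ hac), mem_univ c⟩
  have htwo : ∀ w ∈ s, 2 ≤ #(children w) := fun w hw => by
    obtain ⟨c₁, c₂, hc, h₁, h₂⟩ := hs w hw
    exact one_lt_card.2 ⟨c₁, by simpa [children], c₂, by simpa [children], hc⟩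
  calc 2 * #s = ∑ _w ∈ s, 2 := by rw [sum_const, smul_eq_mul, mul_comm]
    _ ≤ ∑ w ∈ s, #(children w) := sum_le_sum htwo
    _ = #(s.biUnion children) := (card_biUnion hdisj).symm
    _ ≤ #(univ.erase r) := card_le_card hsub
    _ < Fintype.card V := card_erase_lt_of_mem (mem_univ r)

end Forks

theorem IsRootedTree.rel_symm_of_map_rel {V W : Type*} [Fintype V] [Fintype W]
    {ES : V → V → Prop} {ET : W → W → Prop} {rS : V} {rT : W} (hS : IsRootedTree ES rS)
    (hT : IsRootedTree ET rT) (e : V ≃ W) (he : ∀ a b, ES a b → ET (e a) (e b)) {x y : W}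
    (h : ET x y) : ES (e.symm x) (e.symm y) := by
  -- otherwise `e.symm rT` is not the root of `S`, and its parent arc is sent into `rT`
  have hy : e.symm y ≠ rS := by
    intro hy
    have hz : e.symm rT ≠ rS := by
      intro hz
      apply hT.not_rel_root (a := x)
      rwa [← e.apply_symm_apply rT, hz, ← hy, e.apply_symm_apply]
    obtain ⟨p, hp⟩ := hS.exists_parent hz
    exact hT.not_rel_root (by simpa using he _ _ hp)
  obtain ⟨p, hp⟩ := hS.exists_parent hy
  have hpx : e p = x := hT.parent_unique (by simpa using he _ _ hp) h
  rwa [← hpx, e.symm_apply_apply]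

namespace IsMinorEmb

variable {V W : Type*} {ES : V → V → Prop} {ET : W → W → Prop} {f : V → W} {v a b : V}

theorem of_map_rel (hf : Injective f) (h : ∀ a b, ES a b → ET (f a) (f b)) :
    IsMinorEmb ES ET f :=
  ⟨hf, fun a b hab => ⟨[f a, f b], isPath_pair (h a b hab), by simp⟩⟩

theorem reflTransGen (hf : IsMinorEmb ES ET f) (h : ES a b) : ReflTransGen ET (f a) (f b) :=
  let ⟨_, hp, _⟩ := hf.2 a b h
  hp.reflTransGen

theorem rel_of_surjective (hf : IsMinorEmb ES ET f) (hS : ∀ x, ¬ ES x x) (hsurj : Surjective f)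
    (h : ES a b) : ET (f a) (f b) := by
  obtain ⟨p, hp, hint⟩ := hf.2 a b h
  have hempty : p.tail.dropLast = [] :=
    List.eq_nil_iff_forall_not_mem.2 fun x hx => hint x hx (hsurj x)
  rcases hp.eq_singleton_or_append with ⟨-, hab⟩ | ⟨u, p', hu, hp', rfl⟩
  · exact absurd (hf.1 hab) fun hab => hS a (hab ▸ h)
  · have hp'a : p' = [f a] := by
      rw [hp'.eq_cons] at hempty ⊢
      simpa using hempty
    subst hp'a
    obtain rfl : f a = u := by simpa using hp'.2.2
    exact hu

variable [Fintype W] {rT : W}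

theorem not_reflTransGen_of_siblings (hf : IsMinorEmb ES ET f) (hT : IsRootedTree ET rT)
    (hS : ∀ x, ¬ ES x x) (ha : ES v a) (hb : ES v b) (hab : a ≠ b) :
    ¬ ReflTransGen ET (f a) (f b) := by
  intro hfab
  obtain ⟨pab, hpab⟩ := exists_isPath_of_reflTransGen hfab
  obtain ⟨pa, hpa, -⟩ := hf.2 v a ha
  obtain ⟨pb, hpb, hpb_int⟩ := hf.2 v b hb
  -- by uniqueness of paths, the path from `f v` to `f b` runs through the image point `f a`
  have hmem : f a ∈ pb := by
    rw [hT.isPath_unique hpb (hpa.append_s16 hpab), hpa.eq_dropLast_append]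
    simp
  have hav : a ≠ v := by
    rintro rfl
    exact hS a ha
  exact hpb_int _ (hpb.mem_tail_dropLast hmem (hf.1.ne hav) (hf.1.ne hab)) ⟨a, rfl⟩

theorem exists_fork (hf : IsMinorEmb ES ET f) (hT : IsRootedTree ET rT) (hS : ∀ x, ¬ ES x x)
    (ha : ES v a) (hb : ES v b) (hab : a ≠ b) :
    ∃ w, IsFork ET w ∧ ReflTransGen ET (f v) w ∧ ReflTransGen ET w (f a) ∧
      ReflTransGen ET w (f b) :=
  exists_fork_of_not_reflTransGen (hf.reflTransGen ha) (hf.reflTransGen hb)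
    (hf.not_reflTransGen_of_siblings hT hS ha hb hab)
    (hf.not_reflTransGen_of_siblings hT hS hb ha hab.symm)

theorem exists_forks_without_common_descendant (hf : IsMinorEmb ES ET f)
    (hT : IsRootedTree ET rT) (hS : ∀ x, ¬ ES x x) (ha : ES v a) (hb : ES v b) (hab : a ≠ b)
    (hfa : IsFork ES a) (hfb : IsFork ES b) :
    ∃ w₁ w₂, IsFork ET w₁ ∧ IsFork ET w₂ ∧
      ∀ x, ReflTransGen ET w₁ x → ¬ ReflTransGen ET w₂ x := by
  obtain ⟨c₁, c₂, hc, hac₁, hac₂⟩ := hfa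
  obtain ⟨d₁, d₂, hd, hbd₁, hbd₂⟩ := hfb
  obtain ⟨w₁, hw₁, haw₁, -⟩ := hf.exists_fork hT hS hac₁ hac₂ hc
  obtain ⟨w₂, hw₂, hbw₂, -⟩ := hf.exists_fork hT hS hbd₁ hbd₂ hd
  refine ⟨w₁, w₂, hw₁, hw₂, fun x h₁ h₂ => ?_⟩
  rcases hT.reflTransGen_total_of_common (haw₁.trans h₁) (hbw₂.trans h₂) with h | h
  · exact hf.not_reflTransGen_of_siblings hT hS ha hb hab h
  · exact hf.not_reflTransGen_of_siblings hT hS hb ha hab.symm h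

end IsMinorEmb

abbrev parentRel {n : ℕ} (P : Fin n → Option (Fin n)) (a b : Fin n) : Prop :=
  P b = some a

theorem isRootedTree_parentRel {n : ℕ} (P : Fin n → Option (Fin n)) (r : Fin n)
    (hroot : ∀ v, P v = none ↔ v = r) (hlt : ∀ a b, P b = some a → a < b) :
    IsRootedTree (parentRel P) r := by
  refine .of_unique_parent (fun v h => (hlt v v h).false)
    (fun u h => Option.some_ne_none u (h.symm.trans ((hroot r).2 rfl)))
    (fun ha hb => Option.some_injective _ (ha.symm.trans hb)) fun v => ?_
  induction v using WellFoundedLT.induction with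
  | _ v ih =>
    rcases hP : P v with _ | u
    · rw [(hroot v).1 hP]
    · exact (ih u (hlt u v hP)).tail hP

abbrev binTree : Fin 7 → Fin 7 → Prop :=
  parentRel ![none, some 0, some 0, some 1, some 1, some 2, some 2]

abbrev caterpillar : Fin 7 → Fin 7 → Prop :=
  parentRel ![none, some 0, some 0, some 1, some 1, some 3, some 3]

abbrev commonMinor : Fin 6 → Fin 6 → Prop :=
  parentRel ![none, some 0, some 0, some 0, some 1, some 1]

abbrev commonSupertree : Fin 9 → Fin 9 → Prop :=
  parentRel ![none, some 0, some 0, some 1, some 1, some 3, some 3, some 2, some 2]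

theorem isRootedTree_binTree : IsRootedTree binTree 0 :=
  isRootedTree_parentRel _ 0 (by decide) (by decide)

theorem isRootedTree_caterpillar : IsRootedTree caterpillar 0 :=
  isRootedTree_parentRel _ 0 (by decide) (by decide)

theorem isRootedTree_commonMinor : IsRootedTree commonMinor 0 :=
  isRootedTree_parentRel _ 0 (by decide) (by decide)

theorem isRootedTree_commonSupertree : IsRootedTree commonSupertree 0 :=
  isRootedTree_parentRel _ 0 (by decide) (by decide)

theorem isMinorEmb_commonMinor_binTree :
    IsMinorEmb commonMinor binTree ![0, 1, 5, 6, 3, 4] := by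
  refine ⟨by decide, fun a b hab => ⟨![[], [0, 1], [0, 2, 5], [0, 2, 6], [1, 3], [1, 4]] b, ?_⟩⟩
  revert a b
  simp only [Set.mem_range, not_exists]
  decide

theorem isMinorEmb_commonMinor_caterpillar :
    IsMinorEmb commonMinor caterpillar ![0, 3, 2, 4, 5, 6] := by
  refine ⟨by decide, fun a b hab => ⟨![[], [0, 1, 3], [0, 2], [0, 1, 4], [3, 5], [3, 6]] b, ?_⟩⟩
  revert a b
  simp only [Set.mem_range, not_exists]
  decide

theorem isMinorEmb_binTree_commonSupertree :
    IsMinorEmb binTree commonSupertree ![0, 1, 2, 3, 4, 7, 8] :=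
  .of_map_rel (by decide) (by decide)

theorem isMinorEmb_caterpillar_commonSupertree :
    IsMinorEmb caterpillar commonSupertree ![0, 1, 2, 3, 4, 5, 6] :=
  .of_map_rel (by decide) (by decide)

theorem isFork_binTree_one : IsFork binTree 1 := ⟨3, 4, by decide, rfl, rfl⟩

theorem isFork_binTree_two : IsFork binTree 2 := ⟨5, 6, by decide, rfl, rfl⟩

theorem reflTransGen_three_of_isFork_caterpillar {w : Fin 7} (hw : IsFork caterpillar w) :
    ReflTransGen caterpillar w 3 := by
  have hw' : w = 0 ∨ w = 1 ∨ w = 3 := by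
    revert w
    unfold IsFork
    decide
  have h13 : ReflTransGen caterpillar 1 3 := .single rfl
  rcases hw' with rfl | rfl | rfl
  · exact .head rfl h13
  · exact h13
  · exact .refl

theorem le_six_of_commonMinorSize {m : ℕ} (h : CommonMinorSize binTree caterpillar m) :
    m ≤ 6 := by
  obtain ⟨ES, rS, hS, ⟨f, hf⟩, ⟨g, hg⟩⟩ := h
  have hm : m ≤ 7 := by simpa using Fintype.card_le_of_injective f hf.1
  refine Nat.le_of_lt_succ (hm.lt_of_ne ?_)
  rintro rfl
  let e : Fin 7 ≃ Fin 7 := Equiv.ofBijective f (Finite.injective_iff_bijective.1 hf.1)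
  have hrel : ∀ x y, binTree x y → ES (e.symm x) (e.symm y) := fun _ _ =>
    hS.rel_symm_of_map_rel isRootedTree_binTree e fun _ _ =>
      hf.rel_of_surjective hS.no_self e.surjective
  obtain ⟨w₁, w₂, hw₁, hw₂, hdisj⟩ := hg.exists_forks_without_common_descendant
    isRootedTree_caterpillar hS.no_self (hrel 0 1 rfl) (hrel 0 2 rfl)
    (e.symm.injective.ne (by decide)) (isFork_binTree_one.map e.symm.injective hrel)
    (isFork_binTree_two.map e.symm.injective hrel)
  exact hdisj 3 (reflTransGen_three_of_isFork_caterpillar hw₁)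
    (reflTransGen_three_of_isFork_caterpillar hw₂)

open Finset in
theorem exists_forks_on_path_of_caterpillar {V : Type*} [Fintype V] {ES : V → V → Prop}
    {rS : V} (hS : IsRootedTree ES rS) {g : Fin 7 → V} (hg : IsMinorEmb caterpillar ES g) :
    ∃ s : Finset V, #s = 3 ∧ (∀ u ∈ s, IsFork ES u) ∧ ∃ z, ∀ u ∈ s, ReflTransGen ES u z := by
  classical
  have hC := isRootedTree_caterpillar.no_self
  obtain ⟨u₁, hu₁, -, hu₁g₁, hu₁g₂⟩ :=
    hg.exists_fork hS hC (v := 0) (a := 1) (b := 2) rfl rfl (by decide)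
  obtain ⟨u₂, hu₂, hg₁u₂, hu₂g₃, hu₂g₄⟩ :=
    hg.exists_fork hS hC (v := 1) (a := 3) (b := 4) rfl rfl (by decide)
  obtain ⟨u₃, hu₃, hg₃u₃, -, -⟩ :=
    hg.exists_fork hS hC (v := 3) (a := 5) (b := 6) rfl rfl (by decide)
  have hu₁_ne : u₁ ≠ g 1 := fun h =>
    hg.not_reflTransGen_of_siblings hS hC (v := 0) rfl rfl (by decide) (h ▸ hu₁g₂)
  have hu₂_ne : u₂ ≠ g 3 := fun h =>
    hg.not_reflTransGen_of_siblings hS hC (v := 1) rfl rfl (by decide) (h ▸ hu₂g₄)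
  have hu₂u₃ : ReflTransGen ES u₂ u₃ := hu₂g₃.trans hg₃u₃
  refine ⟨{u₁, u₂, u₃}, card_eq_three.2 ⟨u₁, u₂, u₃, ?_, ?_, ?_, rfl⟩, ?_, u₃, ?_⟩
  · exact hS.ne_of_reflTransGen_of_ne hu₁g₁ hg₁u₂ hu₁_ne
  · exact hS.ne_of_reflTransGen_of_ne hu₁g₁ (hg₁u₂.trans hu₂u₃) hu₁_ne
  · exact hS.ne_of_reflTransGen_of_ne hu₂g₃ hg₃u₃ hu₂_ne
  · simp [hu₁, hu₂, hu₃]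
  · simp [hu₂u₃, (hu₁g₁.trans hg₁u₂).trans hu₂u₃, ReflTransGen.refl]

open Finset in
theorem nine_le_of_commonSupSize {m : ℕ} (h : CommonSupSize binTree caterpillar m) :
    9 ≤ m := by
  classical
  obtain ⟨ES, rS, hS, ⟨f, hf⟩, ⟨g, hg⟩⟩ := h
  obtain ⟨w₁, w₂, hw₁, hw₂, hdisj⟩ := hf.exists_forks_without_common_descendant hS
    isRootedTree_binTree.no_self (v := 0) rfl rfl (by decide) isFork_binTree_one
    isFork_binTree_two
  obtain ⟨s, hs, hsfork, z, hz⟩ := exists_forks_on_path_of_caterpillar hS hg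
  obtain ⟨w, hw, hwz⟩ : ∃ w, IsFork ES w ∧ ¬ ReflTransGen ES w z := by
    by_contra! hall
    exact hdisj z (hall w₁ hw₁) (hall w₂ hw₂)
  have hws : w ∉ s := fun hws => hwz (hz w hws)
  have hcard := hS.two_mul_card_lt (insert w s) (forall_mem_insert _ _ _ |>.2 ⟨hw, hsfork⟩)
  rw [card_insert_of_notMem hws, hs, Fintype.card_fin] at hcard
  exact hcard

/-- There exist rooted trees `T₁`, `T₂` with largest common minor size `nμ` and
smallest common supertree size `nσ` such that `nσ ≠ |V(T₁)| + |V(T₂)| − nμ`. -/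
theorem stmt16 :
    ∃ (n1 n2 : ℕ) (E1 : Fin n1 → Fin n1 → Prop) (r1 : Fin n1)
      (E2 : Fin n2 → Fin n2 → Prop) (r2 : Fin n2) (nmu nsig : ℕ),
      IsRootedTree E1 r1 ∧ IsRootedTree E2 r2 ∧
      CommonMinorSize E1 E2 nmu ∧ (∀ m : ℕ, CommonMinorSize E1 E2 m → m ≤ nmu) ∧
      CommonSupSize E1 E2 nsig ∧ (∀ m : ℕ, CommonSupSize E1 E2 m → nsig ≤ m) ∧
      nsig ≠ n1 + n2 - nmu := by
  refine ⟨7, 7, binTree, 0, caterpillar, 0, 6, 9, isRootedTree_binTree,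
    isRootedTree_caterpillar, ?_, fun _ => le_six_of_commonMinorSize, ?_,
    fun _ => nine_le_of_commonSupSize, by norm_num⟩
  · exact ⟨commonMinor, 0, isRootedTree_commonMinor, ⟨_, isMinorEmb_commonMinor_binTree⟩,
      ⟨_, isMinorEmb_commonMinor_caterpillar⟩⟩
  · exact ⟨commonSupertree, 0, isRootedTree_commonSupertree,
      ⟨_, isMinorEmb_binTree_commonSupertree⟩, ⟨_, isMinorEmb_caterpillar_commonSupertree⟩⟩
end
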